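/- arXiv:0911.0932 — 3 statements merged into one kernel-verified Lean document; each statement's English description precedes it below -/
import Mathlib

section
/- The function Q(x) = (3/2) / cosh²(x/2) satisfies the ODE Q'' + Q² = Q on ℝ. -/
noncomputable def Q (x : ℝ) : ℝ := (3/2) / (Real.cosh (x/2))^2

/-!
With `g y = sech² y = (cosh y ^ 2)⁻¹`, the identity `sinh² = cosh² - 1` gives `g'' = 4 g - 6 g²`.
Since `Q x = (3/2) g (x/2)`, the rescaling multiplies `g''` by `(3/2) (1/2)²`, which turns this
into `Q'' = Q - Q²`.
-/

open Real

theorem deriv_deriv_const_mul_comp_mul_left {𝕜 : Type*} [NontriviallyNormedField 𝕜]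
    (a c : 𝕜) (f : 𝕜 → 𝕜) (x : 𝕜) :
    deriv (deriv fun y => a * f (c * y)) x = a * c ^ 2 * deriv (deriv f) (c * x) := by
  have hderiv : deriv (fun y => a * f (c * y)) = fun y => a * c * deriv f (c * y) := by
    funext y
    rw [deriv_const_mul_field']
    beta_reduce
    rw [deriv_comp_mul_left c f y, smul_eq_mul, mul_assoc]
  rw [hderiv, deriv_const_mul_field']
  beta_reduce
  rw [deriv_comp_mul_left c (deriv f) x, smul_eq_mul]
  ring

theorem hasDerivAt_inv_cosh_sq (x : ℝ) :
    HasDerivAt (fun y => (cosh y ^ 2)⁻¹) (-2 * sinh x / cosh x ^ 3) x := by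
  refine (((hasDerivAt_cosh x).fun_pow 2).fun_inv (pow_ne_zero 2 (cosh_pos x).ne')).congr_deriv ?_
  field_simp
  ring

theorem hasDerivAt_sinh_div_cosh_pow_three (x : ℝ) :
    HasDerivAt (fun y => sinh y / cosh y ^ 3) ((3 - 2 * cosh x ^ 2) / cosh x ^ 4) x := by
  refine ((hasDerivAt_sinh x).fun_div ((hasDerivAt_cosh x).fun_pow 3)
    (pow_ne_zero 3 (cosh_pos x).ne')).congr_deriv ?_
  have hsinh : sinh x ^ 2 = cosh x ^ 2 - 1 := by linarith [cosh_sq_sub_sinh_sq x]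
  field_simp
  linear_combination -3 * cosh x ^ 2 * hsinh

theorem deriv_deriv_inv_cosh_sq (x : ℝ) :
    deriv (deriv fun y => (cosh y ^ 2)⁻¹) x = 4 * (cosh x ^ 2)⁻¹ - 6 * ((cosh x ^ 2)⁻¹) ^ 2 := by
  have hderiv : deriv (fun y => (cosh y ^ 2)⁻¹) = fun y => -2 * (sinh y / cosh y ^ 3) := by
    funext y
    rw [(hasDerivAt_inv_cosh_sq y).deriv, mul_div_assoc]
  rw [hderiv, deriv_const_mul_field']
  beta_reduce
  rw [(hasDerivAt_sinh_div_cosh_pow_three x).deriv]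
  field_simp
  ring

theorem Q_ode (x : ℝ) : deriv (deriv Q) x + (Q x)^2 = Q x := by
  have hQ : Q = fun y => 3 / 2 * (cosh ((1 / 2) * y) ^ 2)⁻¹ := by
    funext y
    rw [Q, div_eq_mul_inv, one_div_mul_eq_div]
  rw [hQ, deriv_deriv_const_mul_comp_mul_left (3 / 2) (1 / 2) (fun y => (cosh y ^ 2)⁻¹),
    deriv_deriv_inv_cosh_sq]
  ring
end

section
/- For every x ∈ ℝ, the derivative of Q'/Q equals −Q/3, i.e. (Q'/Q)'(x) = −Q(x)/3. -/
/-! `Q'/Q` is the logarithmic derivative of `(3/2) cosh(x/2)⁻²`, i.e. `-tanh(x/2)`; since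
`tanh' = 1/cosh²`, its derivative is `-(1/2)/cosh²(x/2) = -Q/3`. -/

open Real

theorem Real.hasDerivAt_tanh (x : ℝ) : HasDerivAt tanh (1 / cosh x ^ 2) x := by
  have h := (hasDerivAt_sinh x).div (hasDerivAt_cosh x) (cosh_pos x).ne'
  rw [show sinh / cosh = tanh from funext fun y => (tanh_eq_sinh_div_cosh y).symm] at h
  refine h.congr_deriv ?_
  rw [← cosh_sq_sub_sinh_sq x]
  ring

theorem HasDerivAt.tanh {f : ℝ → ℝ} {f' x : ℝ} (hf : HasDerivAt f f' x) :
    HasDerivAt (fun y => Real.tanh (f y)) (f' / Real.cosh (f x) ^ 2) x :=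
  ((hasDerivAt_tanh (f x)).comp x hf).congr_deriv (by ring)

theorem logDeriv_Q (x : ℝ) : logDeriv Q x = -tanh (x / 2) := by
  have hQ : Q = fun y => 3 / 2 * (cosh ∘ (· / 2)) y ^ (-2 : ℤ) := by
    funext y; simp [Q, div_eq_mul_inv]
  have hc : DifferentiableAt ℝ (cosh ∘ (· / 2)) x := by fun_prop
  rw [hQ, logDeriv_const_mul _ _ (by norm_num), logDeriv_fun_zpow hc,
    logDeriv_comp (differentiable_cosh _) (by fun_prop), logDeriv_cosh]
  simp only [Int.reduceNeg, Int.cast_neg, Int.cast_ofNat, deriv_div_const, deriv_id'']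
  ring

theorem deriv_Q'_over_Q (x : ℝ) :
    deriv (fun y => deriv Q y / Q y) x = -Q x / 3 := by
  have hlogDeriv : (fun y => deriv Q y / Q y) = fun y => -tanh (y / 2) := funext logDeriv_Q
  rw [hlogDeriv, (((hasDerivAt_id' x).div_const 2).tanh.fun_neg).deriv, Q]
  ring
end

section
/- For λ ∈ [0,1), the mass M(Q_μ) = ∫ℝ [λ (Q_μ')² + Q_μ²] equals (1/5)(∫ℝ Q²)(1+μ)^{3/2}(1+λμ)^{−1/2}(5 + λ(1+6μ)), and d/dμ M(Q_μ) = (1/10)(∫ℝ Q²)(1+μ)^{1/2}(1+λμ)^{−3/2}(15(1−λ)² + 8λ(1+μ)(5(1−λ)+3λ(1+μ))) > 0 for all μ > −1. -/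
noncomputable def Qmu (l μ : ℝ) (x : ℝ) : ℝ :=
  (1 + μ) * Q (Real.sqrt ((1 + μ) / (1 + l * μ)) * x)

noncomputable def M (l μ : ℝ) : ℝ :=
  ∫ x : ℝ, (l * (deriv (Qmu l μ) x)^2 + (Qmu l μ x)^2)

/-!
Substituting `t = tanh (x / 2)`, for which `dt = (1 - t²) dx / 2`, turns `Q = 3/2 (1 - t²)` and
`Q' = -3/2 t (1 - t²)` into polynomials in `t`, so `∫ Q² = 6` and `∫ Q'² = 6/5` are integrals
of polynomials over `(-1, 1)`. Since `Q_μ(x) = (1 + μ) Q(c x)` with `c² = (1 + μ)/(1 + λμ)`,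
the change of variables `x ↦ c x` gives `M(Q_μ) = (1 + μ)² (6/5 λ c + 6/c)`, which is the
closed form. Differentiating it, the derivative is a positive prefactor times
`15 (1 - λ)² + 8λ(1 + μ)(5(1 - λ) + 3λ(1 + μ))`, a sum of nonnegative terms with the first
one positive.
-/

open Real MeasureTheory Filter Set Topology

namespace Real

theorem one_sub_tanh_sq (x : ℝ) : 1 - tanh x ^ 2 = (cosh x ^ 2)⁻¹ := by
  have hc := (cosh_pos x).ne'
  rw [tanh_eq_sinh_div_cosh]
  field_simp
  linear_combination cosh_sq_sub_sinh_sq x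

theorem hasDerivAt_tanh_s18 (x : ℝ) : HasDerivAt tanh (1 - tanh x ^ 2) x := by
  have h := (hasDerivAt_sinh x).div (hasDerivAt_cosh x) (cosh_pos x).ne'
  have hval : (cosh x * cosh x - sinh x * sinh x) / cosh x ^ 2 = 1 - tanh x ^ 2 := by
    have hc := (cosh_pos x).ne'
    rw [one_sub_tanh_sq]
    field_simp
    linear_combination cosh_sq_sub_sinh_sq x
  rw [hval] at h
  exact h.congr_of_eventuallyEq (.of_forall tanh_eq_sinh_div_cosh)

theorem tendsto_tanh_atTop : Tendsto tanh atTop (𝓝 1) := by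
  have hexp : Tendsto (fun x => exp (-(2 * x))) atTop (𝓝 0) :=
    tendsto_exp_atBot.comp (tendsto_neg_atTop_atBot.comp (tendsto_id.const_mul_atTop two_pos))
  have hlim := ((tendsto_const_nhds (x := (1 : ℝ))).sub hexp).div
    (tendsto_const_nhds.add hexp) (by norm_num : (1 : ℝ) + 0 ≠ 0)
  rw [sub_zero, add_zero, div_one] at hlim
  refine hlim.congr fun x => ?_
  have he : exp x * exp x = exp (2 * x) := by rw [← exp_add, two_mul]
  simp only [Pi.div_apply]
  rw [tanh_eq, exp_neg, exp_neg, ← he]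
  have := exp_pos x
  field_simp

theorem tendsto_tanh_atBot : Tendsto tanh atBot (𝓝 (-1)) := by
  simpa [Function.comp_def] using (tendsto_tanh_atTop.comp tendsto_neg_atBot_atTop).neg

theorem rpow_three_halves {x : ℝ} (hx : 0 < x) : x ^ ((3 : ℝ) / 2) = x * √x := by
  rw [show (3 : ℝ) / 2 = 1 / 2 + 1 by norm_num, rpow_add_one hx.ne', sqrt_eq_rpow, mul_comm]

theorem rpow_neg_one_half {x : ℝ} (hx : 0 ≤ x) : x ^ (-(1 : ℝ) / 2) = (√x)⁻¹ := by
  rw [neg_div, rpow_neg hx, sqrt_eq_rpow]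

end Real

theorem integrable_of_hasDerivAt_of_nonneg {F f : ℝ → ℝ} {a b : ℝ}
    (hF : ∀ x, HasDerivAt F (f x) x) (hf : ∀ x, 0 ≤ f x)
    (hbot : Tendsto F atBot (𝓝 a)) (htop : Tendsto F atTop (𝓝 b)) : Integrable f := by
  have hIoi : IntegrableOn f (Ioi 0) :=
    integrableOn_Ioi_deriv_of_nonneg' (fun x _ => hF x) (fun x _ => hf x) htop
  have hIoi_neg : IntegrableOn (fun x => f (-x)) (Ioi 0) := by
    have hderiv (x : ℝ) : HasDerivAt (fun x => -F (-x)) (f (-x)) x := by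
      simpa [Function.comp_def, Pi.neg_def] using ((hF (-x)).comp x (hasDerivAt_neg x)).neg
    exact integrableOn_Ioi_deriv_of_nonneg' (fun x _ => hderiv x) (fun x _ => hf (-x))
      (hbot.comp tendsto_neg_atTop_atBot).neg
  have hIic : IntegrableOn f (Iic 0) := by
    have hneg : MeasurableEmbedding fun x : ℝ => -x := (Homeomorph.neg ℝ).measurableEmbedding
    rw [← Measure.map_neg_eq_self (volume : Measure ℝ), hneg.integrableOn_map_iff]
    simpa [Function.comp_def] using (integrableOn_Ici_iff_integrableOn_Ioi).mpr hIoi_neg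
  rw [← integrableOn_univ, ← Iic_union_Ioi (a := (0 : ℝ))]
  exact hIic.union hIoi

theorem hasDerivAt_tanh_half (x : ℝ) :
    HasDerivAt (fun x => tanh (x / 2)) ((1 - tanh (x / 2) ^ 2) / 2) x := by
  refine ((hasDerivAt_tanh_s18 (x / 2)).comp x ((hasDerivAt_id' x).div_const 2)).congr_deriv ?_
  ring

theorem integrable_and_integral_comp_tanh_half {P p : ℝ → ℝ} (hP : ∀ t, HasDerivAt P (p t) t)
    (hp : ∀ t ∈ Ioo (-1 : ℝ) 1, 0 ≤ p t) :
    Integrable (fun x => p (tanh (x / 2)) * (1 - tanh (x / 2) ^ 2) / 2) ∧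
      ∫ x, p (tanh (x / 2)) * (1 - tanh (x / 2) ^ 2) / 2 = P 1 - P (-1) := by
  have hF (x : ℝ) : HasDerivAt (fun x => P (tanh (x / 2)))
      (p (tanh (x / 2)) * (1 - tanh (x / 2) ^ 2) / 2) x := by
    refine ((hP _).comp x (hasDerivAt_tanh_half x)).congr_deriv ?_
    ring
  have hnonneg (x : ℝ) : 0 ≤ p (tanh (x / 2)) * (1 - tanh (x / 2) ^ 2) / 2 := by
    have hsech : 0 ≤ 1 - tanh (x / 2) ^ 2 := by rw [one_sub_tanh_sq]; positivity
    have := hp (tanh (x / 2)) ⟨neg_one_lt_tanh _, tanh_lt_one _⟩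
    positivity
  have htop : Tendsto (fun x => P (tanh (x / 2))) atTop (𝓝 (P 1)) :=
    (hP 1).continuousAt.tendsto.comp
      (tendsto_tanh_atTop.comp (tendsto_id.atTop_div_const two_pos))
  have hbot : Tendsto (fun x => P (tanh (x / 2))) atBot (𝓝 (P (-1))) :=
    (hP (-1)).continuousAt.tendsto.comp
      (tendsto_tanh_atBot.comp (tendsto_id.atBot_div_const two_pos))
  have hint := integrable_of_hasDerivAt_of_nonneg hF hnonneg hbot htop
  exact ⟨hint, integral_of_hasDerivAt_of_tendsto hF hint hbot htop⟩

theorem Q_eq_one_sub_tanh_sq (x : ℝ) : Q x = 3 / 2 * (1 - tanh (x / 2) ^ 2) := by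
  rw [Q, one_sub_tanh_sq]
  ring

theorem hasDerivAt_Q (x : ℝ) :
    HasDerivAt Q (-(3 / 2) * tanh (x / 2) * (1 - tanh (x / 2) ^ 2)) x := by
  rw [funext Q_eq_one_sub_tanh_sq]
  refine ((((hasDerivAt_tanh_half x).pow 2).const_sub 1).const_mul (3 / 2)).congr_deriv ?_
  ring

theorem integrable_sq_Q_and_integral : Integrable (fun x => Q x ^ 2) ∧ ∫ x, Q x ^ 2 = 6 := by
  have hP (t : ℝ) : HasDerivAt (fun t => 9 / 2 * (t - t ^ 3 / 3)) (9 / 2 * (1 - t ^ 2)) t := by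
    refine (((hasDerivAt_id' t).sub ((hasDerivAt_pow 3 t).div_const 3)).const_mul
      (9 / 2)).congr_deriv ?_
    ring
  have hp (t : ℝ) (ht : t ∈ Ioo (-1 : ℝ) 1) : 0 ≤ 9 / 2 * (1 - t ^ 2) := by
    nlinarith [ht.1, ht.2]
  have hQ : (fun x => Q x ^ 2) =
      fun x => 9 / 2 * (1 - tanh (x / 2) ^ 2) * (1 - tanh (x / 2) ^ 2) / 2 := by
    funext x
    rw [Q_eq_one_sub_tanh_sq]
    ring
  obtain ⟨hint, hval⟩ := integrable_and_integral_comp_tanh_half hP hp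
  rw [hQ]
  exact ⟨hint, by rw [hval]; norm_num⟩

theorem integrable_sq_deriv_Q_and_integral :
    Integrable (fun x => deriv Q x ^ 2) ∧ ∫ x, deriv Q x ^ 2 = 6 / 5 := by
  have hP (t : ℝ) : HasDerivAt (fun t => 9 / 2 * (t ^ 3 / 3 - t ^ 5 / 5))
      (9 / 2 * (t ^ 2 * (1 - t ^ 2))) t := by
    refine ((((hasDerivAt_pow 3 t).div_const 3).sub
      ((hasDerivAt_pow 5 t).div_const 5)).const_mul (9 / 2)).congr_deriv ?_
    ring
  have hp (t : ℝ) (ht : t ∈ Ioo (-1 : ℝ) 1) : 0 ≤ 9 / 2 * (t ^ 2 * (1 - t ^ 2)) := by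
    have : 0 ≤ 1 - t ^ 2 := by nlinarith [ht.1, ht.2]
    positivity
  have hQ' : (fun x => deriv Q x ^ 2) = fun x =>
      9 / 2 * (tanh (x / 2) ^ 2 * (1 - tanh (x / 2) ^ 2)) * (1 - tanh (x / 2) ^ 2) / 2 := by
    funext x
    rw [(hasDerivAt_Q x).deriv]
    ring
  obtain ⟨hint, hval⟩ := integrable_and_integral_comp_tanh_half hP hp
  rw [hQ']
  exact ⟨hint, by rw [hval]; norm_num⟩

noncomputable def mass (l : ℝ) (v : ℝ → ℝ) : ℝ :=
  ∫ x, l * deriv v x ^ 2 + v x ^ 2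

theorem mass_const_mul_comp_mul (l a : ℝ) {c : ℝ} (hc : c ≠ 0) {f : ℝ → ℝ}
    (hf : Differentiable ℝ f) (hf' : Integrable fun x => deriv f x ^ 2)
    (hf2 : Integrable fun x => f x ^ 2) :
    mass l (fun x => a * f (c * x)) =
      a ^ 2 * |c|⁻¹ * (l * c ^ 2 * (∫ x, deriv f x ^ 2) + ∫ x, f x ^ 2) := by
  have hderiv (x : ℝ) : deriv (fun x => a * f (c * x)) x = a * c * deriv f (c * x) := by
    have h := ((hf (c * x)).hasDerivAt.comp x ((hasDerivAt_id' x).const_mul c)).const_mul a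
    refine (h.congr_deriv ?_).deriv
    ring
  have hintegrand : (fun x => l * deriv (fun x => a * f (c * x)) x ^ 2 + (a * f (c * x)) ^ 2) =
      fun x => l * (a * c) ^ 2 * deriv f (c * x) ^ 2 + a ^ 2 * f (c * x) ^ 2 := by
    funext x
    rw [hderiv]
    ring
  rw [mass, hintegrand, integral_add ((hf'.comp_mul_left' hc).const_mul _)
      ((hf2.comp_mul_left' hc).const_mul _), integral_const_mul, integral_const_mul,
    Measure.integral_comp_mul_left (fun y => deriv f y ^ 2),
    Measure.integral_comp_mul_left (fun y => f y ^ 2), smul_eq_mul, smul_eq_mul, abs_inv]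
  ring

theorem one_add_mul_pos {l μ : ℝ} (hl : 0 ≤ l) (hl1 : l ≤ 1) (hμ : -1 < μ) :
    0 < 1 + l * μ := by
  have hA : 0 ≤ 1 + μ := by linarith
  nlinarith [mul_nonneg hl hA, mul_nonneg (sub_nonneg.2 hl1) hA]

theorem M_eq_rpow {l μ : ℝ} (hA : 0 < 1 + μ) (hB : 0 < 1 + l * μ) :
    M l μ = 6 / 5 * (1 + μ) ^ ((3 : ℝ) / 2) * (1 + l * μ) ^ (-(1 : ℝ) / 2) *
      (5 + l * (1 + 6 * μ)) := by
  have hc : 0 < √((1 + μ) / (1 + l * μ)) := sqrt_pos.2 (div_pos hA hB)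
  have hM : M l μ = mass l (fun x => (1 + μ) * Q (√((1 + μ) / (1 + l * μ)) * x)) := rfl
  obtain ⟨hQ'int, hQ'⟩ := integrable_sq_deriv_Q_and_integral
  obtain ⟨hQint, hQ⟩ := integrable_sq_Q_and_integral
  rw [hM, mass_const_mul_comp_mul l _ hc.ne' (fun x => (hasDerivAt_Q x).differentiableAt)
      hQ'int hQint, hQ', hQ, abs_of_pos hc, sqrt_div hA.le, rpow_three_halves hA,
    rpow_neg_one_half hB.le, show 5 + l * (1 + 6 * μ) = l * (1 + μ) + 5 * (1 + l * μ) by ring]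
  have hsA : 0 < √(1 + μ) := sqrt_pos.2 hA
  have hsB : 0 < √(1 + l * μ) := sqrt_pos.2 hB
  have hsA2 := sq_sqrt hA.le
  have hsB2 := sq_sqrt hB.le
  set sA := √(1 + μ)
  set sB := √(1 + l * μ)
  rw [← hsA2, ← hsB2]
  field_simp

theorem hasDerivAt_mass_closedForm {l μ : ℝ} (hA : 0 < 1 + μ) (hB : 0 < 1 + l * μ) :
    HasDerivAt
      (fun ν => 6 / 5 * (1 + ν) ^ ((3 : ℝ) / 2) * (1 + l * ν) ^ (-(1 : ℝ) / 2) *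
        (5 + l * (1 + 6 * ν)))
      (3 / 5 * (1 + μ) ^ ((1 : ℝ) / 2) * (1 + l * μ) ^ (-(3 : ℝ) / 2) *
        (15 * (1 - l) ^ 2 + 8 * l * (1 + μ) * (5 * (1 - l) + 3 * l * (1 + μ)))) μ := by
  have hA' := ((hasDerivAt_id' μ).const_add 1).rpow_const (p := (3 : ℝ) / 2) (Or.inl hA.ne')
  have hB' := (((hasDerivAt_id' μ).const_mul l).const_add 1).rpow_const (p := -(1 : ℝ) / 2)
    (Or.inl hB.ne')
  have hU := (((hasDerivAt_id' μ).const_mul 6).const_add 1).const_mul l |>.const_add 5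
  refine (((hA'.const_mul (6 / 5)).mul hB').mul hU).congr_deriv ?_
  have hApow : (1 + μ) ^ ((3 : ℝ) / 2 - 1) = (1 + μ) ^ ((1 : ℝ) / 2) := by norm_num
  have hBpow : (1 + l * μ) ^ (-(1 : ℝ) / 2 - 1) = (1 + l * μ) ^ (-(3 : ℝ) / 2) := by norm_num
  have hA32 : (1 + μ) ^ ((3 : ℝ) / 2) = (1 + μ) ^ ((1 : ℝ) / 2) * (1 + μ) := by
    rw [← rpow_add_one hA.ne']; norm_num
  have hB12 : (1 + l * μ) ^ (-(1 : ℝ) / 2) = (1 + l * μ) ^ (-(3 : ℝ) / 2) * (1 + l * μ) := by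
    rw [← rpow_add_one hB.ne']; norm_num
  simp only [Pi.mul_apply]
  rw [hApow, hBpow, hA32, hB12]
  ring

theorem mass_formula_and_monotonicity (l : ℝ) (hl : 0 ≤ l) (hl1 : l < 1) :
    ∀ μ : ℝ, -1 < μ →
      M l μ = (1/5) * (∫ x : ℝ, (Q x)^2) * (1 + μ) ^ ((3:ℝ)/2)
                * (1 + l * μ) ^ (-(1:ℝ)/2) * (5 + l * (1 + 6 * μ)) ∧
      deriv (M l) μ = (1/10) * (∫ x : ℝ, (Q x)^2) * (1 + μ) ^ ((1:ℝ)/2)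
                * (1 + l * μ) ^ (-(3:ℝ)/2)
                * (15 * (1 - l)^2 + 8 * l * (1 + μ) * (5 * (1 - l) + 3 * l * (1 + μ))) ∧
      0 < deriv (M l) μ := by
  intro μ hμ
  have hA : 0 < 1 + μ := by linarith
  have h1l : 0 < 1 - l := by linarith
  have hB : 0 < 1 + l * μ := one_add_mul_pos hl hl1.le hμ
  have hM : M l =ᶠ[𝓝 μ] fun ν =>
      6 / 5 * (1 + ν) ^ ((3 : ℝ) / 2) * (1 + l * ν) ^ (-(1 : ℝ) / 2) * (5 + l * (1 + 6 * ν)) := by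
    filter_upwards [Ioi_mem_nhds hμ] with ν hν
    exact M_eq_rpow (by linarith [mem_Ioi.1 hν]) (one_add_mul_pos hl hl1.le hν)
  have hderiv := ((hasDerivAt_mass_closedForm hA hB).congr_of_eventuallyEq hM).deriv
  have hfactor : 0 < 15 * (1 - l) ^ 2 + 8 * l * (1 + μ) * (5 * (1 - l) + 3 * l * (1 + μ)) := by
    positivity
  rw [integrable_sq_Q_and_integral.2, hderiv]
  refine ⟨by rw [M_eq_rpow hA hB]; ring, by ring, ?_⟩
  have := rpow_pos_of_pos hA ((1 : ℝ) / 2)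
  have := rpow_pos_of_pos hB (-(3 : ℝ) / 2)
  positivity
end
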